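/- arXiv:1405.2153 — 4 statements merged into one kernel-verified Lean document; each statement's English description precedes it below -/
import Mathlib

section
/- For any locally integrable f on the upper half-space R^{1+n}_+ and any x ∈ R^n, the Carleson functional satisfies Cf(x) ≲ M(Af)(x), where A is the area functional with aperture α, M is the Hardy–Littlewood maximal function, and the implicit constant depends only on n and α. -/
open MeasureTheory Set ENNReal

noncomputable section

/-- The axis-parallel cube in `ℝⁿ` with lower corner `a` and side length `l`. -/
def cube {n : ℕ} (a : Fin n → ℝ) (l : ℝ) : Set (Fin n → ℝ) :=
  {x | ∀ i, a i ≤ x i ∧ x i < a i + l}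

/-- The Carleson functional `Cf(x) = sup_{Q ∋ x} |Q|⁻¹ ∫∫_{(0,ℓ(Q))×Q} |f| dt dy`. -/
def carlesonFn {n : ℕ} (f : ℝ × (Fin n → ℝ) → ℝ) (x : Fin n → ℝ) : ℝ≥0∞ :=
  ⨆ (a : Fin n → ℝ) (l : ℝ) (_ : 0 < l) (_ : x ∈ cube a l),
    (∫⁻ p in (Set.Ioo (0 : ℝ) l) ×ˢ cube a l, (‖f p‖₊ : ℝ≥0∞)) / volume (cube a l)

/-- The area functional `Af(x) = ∫∫_{|y−x|<αt} |f(t,y)| t^{−n} dt dy` with aperture `α`. -/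
def areaFn {n : ℕ} (α : ℝ) (f : ℝ × (Fin n → ℝ) → ℝ) (x : Fin n → ℝ) : ℝ≥0∞ :=
  ∫⁻ p in {p : ℝ × (Fin n → ℝ) | 0 < p.1 ∧ dist p.2 x < α * p.1},
    (‖f p‖₊ : ℝ≥0∞) * ENNReal.ofReal (p.1⁻¹ ^ n)

/-- The Hardy–Littlewood maximal function (over cubes) of an `ℝ≥0∞`-valued function. -/
def maxHL {n : ℕ} (F : (Fin n → ℝ) → ℝ≥0∞) (x : Fin n → ℝ) : ℝ≥0∞ :=
  ⨆ (a : Fin n → ℝ) (l : ℝ) (_ : 0 < l) (_ : x ∈ cube a l),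
    (∫⁻ y in cube a l, F y) / volume (cube a l)

/-!
A point `(t, y)` of the box `(0, ℓ) × Q` lies in the cone of every `z` in the ball `B(y, αt)`,
of volume `(2αt)ⁿ`, and all these balls lie in the concentric cube `Q*` of side `(1 + 2α)ℓ`.
By Tonelli, `∫_{Q*} Af ≥ ∫∫_{(0,ℓ)×Q} |f| t⁻ⁿ |B(y, αt)| = (2α)ⁿ ∫∫_{(0,ℓ)×Q} |f|`, and dividing by
`|Q*| = (1 + 2α)ⁿ |Q|` gives `Cf ≤ ((1 + 2α) / (2α))ⁿ M(Af)`.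
-/

section Cubes

variable {n : ℕ}

lemma cube_eq_pi (a : Fin n → ℝ) (l : ℝ) :
    cube a l = Set.pi univ fun i => Ico (a i) (a i + l) := by
  ext x
  simp [cube, Set.mem_pi]

lemma measurableSet_cube (a : Fin n → ℝ) (l : ℝ) : MeasurableSet (cube a l) := by
  rw [cube_eq_pi]
  exact MeasurableSet.univ_pi fun _ => measurableSet_Ico

lemma volume_cube (a : Fin n → ℝ) (l : ℝ) : volume (cube a l) = ENNReal.ofReal l ^ n := by
  simp [cube_eq_pi, Real.volume_pi_Ico]

lemma ball_subset_cube_sub {a y : Fin n → ℝ} {l r s : ℝ} (hy : y ∈ cube a l) (hrs : r ≤ s) :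
    Metric.ball y r ⊆ cube (fun i => a i - s) (l + 2 * s) := by
  intro z hz i
  have hzy : |z i - y i| < s := (dist_le_pi_dist z y i).trans_lt (hz.trans_le hrs)
  rw [abs_lt] at hzy
  have := hy i
  constructor <;> linarith

lemma cube_subset_cube_sub {a : Fin n → ℝ} {l s : ℝ} (hs : 0 ≤ s) :
    cube a l ⊆ cube (fun i => a i - s) (l + 2 * s) := by
  intro y hy i
  have := hy i
  constructor <;> linarith

lemma average_le_maxHL (F : (Fin n → ℝ) → ℝ≥0∞) {a x : Fin n → ℝ} {l : ℝ} (hl : 0 < l)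
    (hx : x ∈ cube a l) : (∫⁻ y in cube a l, F y) / volume (cube a l) ≤ maxHL F x :=
  le_iSup₂_of_le a l (le_iSup₂_of_le hl hx le_rfl)

end Cubes

lemma lintegral_lintegral_preimage_swap {X Y : Type*} [MeasurableSpace X] [MeasurableSpace Y]
    {μ : Measure X} {ν : Measure Y} [SFinite μ] [SFinite ν] {S : Set (X × Y)}
    (hS : MeasurableSet S) {g : Y → ℝ≥0∞} (hg : Measurable g) :
    ∫⁻ x, ∫⁻ y in Prod.mk x ⁻¹' S, g y ∂ν ∂μ = ∫⁻ y, g y * μ ((·, y) ⁻¹' S) ∂ν := by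
  calc ∫⁻ x, ∫⁻ y in Prod.mk x ⁻¹' S, g y ∂ν ∂μ
      = ∫⁻ x, ∫⁻ y, S.indicator (fun q => g q.2) (x, y) ∂ν ∂μ := by
        refine lintegral_congr fun x => ?_
        rw [← lintegral_indicator (measurable_prodMk_left hS)]
        rfl
    _ = ∫⁻ y, ∫⁻ x, S.indicator (fun q => g q.2) (x, y) ∂μ ∂ν :=
        lintegral_lintegral_swap ((hg.comp measurable_snd).indicator hS).aemeasurable
    _ = ∫⁻ y, g y * μ ((·, y) ⁻¹' S) ∂ν := by
        refine lintegral_congr fun y => ?_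
        rw [← lintegral_indicator_const (measurable_prodMk_right hS)]
        rfl

section Cone

variable {n : ℕ}

/-- `(x, (t, y)) ∈ cone α` iff `(t, y)` lies in the cone of aperture `α` with vertex `x`. -/
def cone (α : ℝ) : Set ((Fin n → ℝ) × ℝ × (Fin n → ℝ)) :=
  {q | 0 < q.2.1 ∧ dist q.2.2 q.1 < α * q.2.1}

lemma measurableSet_cone (α : ℝ) : MeasurableSet (cone (n := n) α) :=
  (measurableSet_lt measurable_const measurable_snd.fst).inter
    (measurableSet_lt (continuous_snd.snd.dist continuous_fst).measurable
      (measurable_snd.fst.const_mul α))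

lemma preimage_cone {α : ℝ} {p : ℝ × (Fin n → ℝ)} (hp : 0 < p.1) :
    (·, p) ⁻¹' cone α = Metric.ball p.2 (α * p.1) := by
  ext z
  simp [cone, hp, dist_comm]

lemma ofReal_inv_pow_mul_volume_ball {α t : ℝ} (hα : 0 < α) (ht : 0 < t) (y : Fin n → ℝ) :
    ENNReal.ofReal (t⁻¹ ^ n) * volume (Metric.ball y (α * t)) = ENNReal.ofReal ((2 * α) ^ n) := by
  rw [Real.volume_pi_ball _ (by positivity), Fintype.card_fin, ← ENNReal.ofReal_mul (by positivity),
    ← mul_pow]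
  congr 2
  field_simp

lemma ofReal_mul_lintegral_box_le_lintegral_areaFn {α : ℝ} (hα : 0 < α)
    {f : ℝ × (Fin n → ℝ) → ℝ} (hf : Measurable f) (a : Fin n → ℝ) (l : ℝ) :
    ENNReal.ofReal ((2 * α) ^ n) * ∫⁻ p in Ioo 0 l ×ˢ cube a l, (‖f p‖₊ : ℝ≥0∞) ≤
      ∫⁻ z in cube (fun i => a i - α * l) (l + 2 * (α * l)), areaFn α f z := by
  set Q' := cube (fun i => a i - α * l) (l + 2 * (α * l))
  set g : ℝ × (Fin n → ℝ) → ℝ≥0∞ := fun p => ‖f p‖₊ * ENNReal.ofReal (p.1⁻¹ ^ n)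
  have hg : Measurable g := hf.nnnorm.coe_nnreal_ennreal.mul
    (ENNReal.measurable_ofReal.comp (measurable_fst.inv.pow_const n))
  calc ENNReal.ofReal ((2 * α) ^ n) * ∫⁻ p in Ioo 0 l ×ˢ cube a l, (‖f p‖₊ : ℝ≥0∞)
      = ∫⁻ p in Ioo 0 l ×ˢ cube a l, g p * volume.restrict Q' ((·, p) ⁻¹' cone α) := by
        rw [← lintegral_const_mul _ hf.nnnorm.coe_nnreal_ennreal]
        refine setLIntegral_congr_fun (measurableSet_Ioo.prod (measurableSet_cube a l)) ?_
        rintro p ⟨ht, hy⟩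
        beta_reduce
        rw [preimage_cone ht.1, Measure.restrict_eq_self _
          (ball_subset_cube_sub hy (by nlinarith [ht.2])), mul_assoc,
          ofReal_inv_pow_mul_volume_ball hα ht.1, mul_comm]
    _ ≤ ∫⁻ p, g p * volume.restrict Q' ((·, p) ⁻¹' cone α) := setLIntegral_le_lintegral _ _
    _ = ∫⁻ z in Q', ∫⁻ p in Prod.mk z ⁻¹' cone α, g p :=
        (lintegral_lintegral_preimage_swap (measurableSet_cone α) hg).symm
    _ = ∫⁻ z in Q', areaFn α f z := rfl

end Cone

/-- `Cf(x) ≲ M(Af)(x)` pointwise, with constant depending only on `n` and `α`. -/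
theorem stmt1 (n : ℕ) (α : ℝ) (hα : 0 < α) :
    ∃ C : ℝ≥0∞, C ≠ ⊤ ∧
      ∀ (f : ℝ × (Fin n → ℝ) → ℝ), Measurable f →
        ∀ x : Fin n → ℝ, carlesonFn f x ≤ C * maxHL (areaFn α f) x := by
  set c := ENNReal.ofReal ((2 * α) ^ n)
  set K := ENNReal.ofReal ((1 + 2 * α) ^ n)
  have hc : c ≠ 0 := (ENNReal.ofReal_pos.2 (by positivity)).ne'
  have hK : K ≠ 0 := (ENNReal.ofReal_pos.2 (by positivity)).ne'
  refine ⟨c⁻¹ * K, ENNReal.mul_ne_top (ENNReal.inv_ne_top.2 hc) ofReal_ne_top, fun f hf x => ?_⟩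
  refine iSup_le fun a => iSup_le fun l => iSup₂_le fun hl hx => ?_
  set Q' := cube (fun i => a i - α * l) (l + 2 * (α * l))
  have hvol : volume Q' = K * volume (cube a l) := by
    rw [volume_cube, volume_cube, ← ENNReal.ofReal_pow (by positivity),
      ← ENNReal.ofReal_pow hl.le, ← ENNReal.ofReal_mul (by positivity), ← mul_pow]
    ring_nf
  calc (∫⁻ p in Ioo 0 l ×ˢ cube a l, (‖f p‖₊ : ℝ≥0∞)) / volume (cube a l)
      = c⁻¹ * (c * ∫⁻ p in Ioo 0 l ×ˢ cube a l, (‖f p‖₊ : ℝ≥0∞)) / volume (cube a l) := by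
        rw [← mul_assoc, ENNReal.inv_mul_cancel hc ofReal_ne_top, one_mul]
    _ ≤ c⁻¹ * (∫⁻ z in Q', areaFn α f z) / volume (cube a l) := by
        gcongr
        exact ofReal_mul_lintegral_box_le_lintegral_areaFn hα hf a l
    _ = c⁻¹ * K * ((∫⁻ z in Q', areaFn α f z) / volume Q') := by
        rw [hvol, mul_assoc, ← mul_div_assoc K, ENNReal.mul_div_mul_left _ _ hK ofReal_ne_top,
          mul_div_assoc]
    _ ≤ c⁻¹ * K * maxHL (areaFn α f) x := by
        gcongr
        exact average_le_maxHL _ (by positivity) (cube_subset_cube_sub (by positivity) hx)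
end
end

section
/- Let ω_* ⊂ D be any collection of dyadic cubes and define the stopped square function S_{ω_*}u(x) := (Σ_{Q ∈ ω_*} |u_Q − u_{Q_*}|² 1_Q(x))^{1/2}, where u_Q is the average of u over Q and Q_* is the minimal cube in ω_* strictly containing Q (with Q_* := Q if none exists). Then ‖S_{ω_*}u‖_{L²(R^n)} ≲ ‖u‖_{L²(R^n)}, with implicit constant independent of the collection ω_*. -/
/-!
For a cube `H` write `E(H) = ∫_H |u - u_H|²`. On any set `Q` of finite measure
`∫_Q |u - c|² = E(Q) + |Q| |u_Q - c|²`, so for disjoint subcubes `Q_i ⊆ H`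
`∑ᵢ (|Q_i| |u_{Q_i} - u_H|² + E(Q_i)) ≤ E(H)`.
Apply this to the cubes of `ω_*` whose stopping parent is `H`, and recursively inside each of
them: by induction along the (finite part of the) stopping tree, the terms of
`‖S_{ω_*} u‖₂²` coming from cubes with stopping parent inside `H` add up to at most `E(H)`.
Summing over the maximal stopping parents gives `‖S_{ω_*} u‖₂² ≤ ‖u‖₂²`. Only the facts that
dyadic cubes are nested or disjoint and have positive finite measure enter.
-/

open MeasureTheory Set ENNReal

noncomputable section

/-- The dyadic cube of generation `k` (side length `2^{-k}`) at position `m` in `ℝⁿ`. -/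
def dyadic (n : ℕ) (k : ℤ) (m : Fin n → ℤ) : Set (Fin n → ℝ) :=
  {x | ∀ i, (m i : ℝ) * 2 ^ (-k) ≤ x i ∧ x i < ((m i : ℝ) + 1) * 2 ^ (-k)}

/-- `par` assigns to each member of the collection `ω` its stopping parent: the minimal member
of `ω` strictly containing it, and the cube itself if no member of `ω` strictly contains it. -/
def IsStoppingParent (n : ℕ) (ω : Set (ℤ × (Fin n → ℤ)))
    (par : ℤ × (Fin n → ℤ) → ℤ × (Fin n → ℤ)) : Prop :=
  ∀ Q ∈ ω,
    (par Q ∈ ω ∧ dyadic n Q.1 Q.2 ⊂ dyadic n (par Q).1 (par Q).2 ∧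
      ∀ R ∈ ω, dyadic n Q.1 Q.2 ⊂ dyadic n R.1 R.2 →
        dyadic n (par Q).1 (par Q).2 ⊆ dyadic n R.1 R.2)
    ∨ (par Q = Q ∧ ∀ R ∈ ω, ¬ dyadic n Q.1 Q.2 ⊂ dyadic n R.1 R.2)

/-- The square `S_{ω_*}u(x)²` of the stopped square function:
`Σ_{Q ∈ ω_*} |u_Q − u_{Q_*}|² 1_Q(x)`. -/
def Ssq (n : ℕ) (ω : Set (ℤ × (Fin n → ℤ))) (par : ℤ × (Fin n → ℤ) → ℤ × (Fin n → ℤ))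
    (u : (Fin n → ℝ) → ℝ) (x : Fin n → ℝ) : ℝ≥0∞ :=
  ∑' Q : ω, (dyadic n Q.val.1 Q.val.2).indicator
    (fun _ => ENNReal.ofReal
      (((⨍ y in dyadic n Q.val.1 Q.val.2, u y) -
        ⨍ y in dyadic n (par Q.val).1 (par Q.val).2, u y) ^ 2)) x

section Deviation

variable {α : Type*} [MeasurableSpace α] {μ : Measure α} {u : α → ℝ} {s : Set α}

def sqDeviation (μ : Measure α) (u : α → ℝ) (s : Set α) : ℝ :=
  ∫ x in s, (u x - ⨍ y in s, u y ∂μ) ^ 2 ∂μ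

theorem integrableOn_sub_const_sq (hu : MemLp u 2 μ) (hs : μ s ≠ ∞) (c : ℝ) :
    IntegrableOn (fun x => (u x - c) ^ 2) s μ :=
  have := isFiniteMeasure_restrict.mpr hs
  ((hu.restrict s).sub (memLp_const c)).integrable_sq

theorem setIntegral_sub_const_sq (hu : MemLp u 2 μ) (hs : μ s ≠ ∞) (c : ℝ) :
    ∫ x in s, (u x - c) ^ 2 ∂μ = sqDeviation μ u s + μ.real s * ((⨍ y in s, u y ∂μ) - c) ^ 2 := by
  have := isFiniteMeasure_restrict.mpr hs
  set a := ⨍ y in s, u y ∂μ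
  have hua : MemLp (fun x => u x - a) 2 (μ.restrict s) := (hu.restrict s).sub (memLp_const a)
  have h1 : Integrable (fun x => (u x - a) ^ 2) (μ.restrict s) := hua.integrable_sq
  have h2 : Integrable (fun x => 2 * (a - c) * (u x - a)) (μ.restrict s) :=
    (hua.integrable one_le_two).const_mul _
  calc ∫ x in s, (u x - c) ^ 2 ∂μ
      = ∫ x in s, ((u x - a) ^ 2 + 2 * (a - c) * (u x - a) + (a - c) ^ 2) ∂μ := by
        congr 1; ext x; ring
    _ = sqDeviation μ u s + μ.real s * (a - c) ^ 2 := by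
        have h12 : Integrable (fun x => (u x - a) ^ 2 + 2 * (a - c) * (u x - a)) (μ.restrict s) :=
          h1.add h2
        rw [integral_add h12 (integrable_const _), integral_add h1 h2, integral_const_mul,
          integral_sub_average, integral_const, smul_eq_mul, measureReal_restrict_apply_univ,
          mul_zero, add_zero]
        rfl

theorem sqDeviation_le_setIntegral_sub_const_sq (hu : MemLp u 2 μ) (hs : μ s ≠ ∞) (c : ℝ) :
    sqDeviation μ u s ≤ ∫ x in s, (u x - c) ^ 2 ∂μ := by
  rw [setIntegral_sub_const_sq hu hs c]
  exact le_add_of_nonneg_right (by positivity)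

theorem sum_setIntegral_le_setIntegral {ι : Type*} {f : α → ℝ} {t : Set α}
    (hf : IntegrableOn f t μ) (hf0 : ∀ x, 0 ≤ f x) {𝒮 : Finset ι} {s : ι → Set α}
    (hs : ∀ i ∈ 𝒮, MeasurableSet (s i)) (hd : (𝒮 : Set ι).PairwiseDisjoint s)
    (hst : ∀ i ∈ 𝒮, s i ⊆ t) :
    ∑ i ∈ 𝒮, ∫ x in s i, f x ∂μ ≤ ∫ x in t, f x ∂μ := by
  rw [← integral_biUnion_finset 𝒮 hs hd fun i hi => hf.mono_set (hst i hi)]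
  exact setIntegral_mono_set hf (ae_of_all _ hf0) (iUnion₂_subset hst).eventuallyLE

end Deviation

section Laminar

variable {α ι : Type*} {cube : ι → Set α} {ω : Set ι} {par : ι → ι}

structure IsLaminarFamily [MeasurableSpace α] (μ : Measure α) (cube : ι → Set α) : Prop where
  injective : Function.Injective cube
  nested_or_disjoint : ∀ i j, cube i ⊆ cube j ∨ cube j ⊆ cube i ∨ Disjoint (cube i) (cube j)
  measurableSet : ∀ i, MeasurableSet (cube i)
  measure_ne_zero : ∀ i, μ (cube i) ≠ 0
  measure_ne_top : ∀ i, μ (cube i) ≠ ∞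

open scoped Classical in
def maximalCubes (cube : ι → Set α) (𝒜 : Finset ι) : Finset ι :=
  {R ∈ 𝒜 | ∀ S ∈ 𝒜, ¬ cube R ⊂ cube S}

theorem mem_maximalCubes {𝒜 : Finset ι} {R : ι} :
    R ∈ maximalCubes cube 𝒜 ↔ R ∈ 𝒜 ∧ ∀ S ∈ 𝒜, ¬ cube R ⊂ cube S := by
  classical
  simp [maximalCubes]

theorem exists_mem_maximalCubes_subset {𝒜 : Finset ι} {A : ι} (hA : A ∈ 𝒜) :
    ∃ R ∈ maximalCubes cube 𝒜, cube A ⊆ cube R := by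
  classical
  obtain ⟨R, hR, hmax⟩ := Finset.exists_maximalFor cube (𝒜.filter fun S => cube A ⊆ cube S)
    ⟨A, Finset.mem_filter.mpr ⟨hA, subset_rfl⟩⟩
  obtain ⟨hR𝒜, hAR⟩ := Finset.mem_filter.mp hR
  refine ⟨R, mem_maximalCubes.mpr ⟨hR𝒜, fun S hS hRS => hRS.2 ?_⟩, hAR⟩
  exact hmax (Finset.mem_filter.mpr ⟨hS, hAR.trans hRS.1⟩) hRS.1

-- `IsStoppingParent n` is the case `cube = Function.uncurry (dyadic n)`.
def IsStoppingParentFor (cube : ι → Set α) (ω : Set ι) (par : ι → ι) : Prop :=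
  ∀ Q ∈ ω,
    (par Q ∈ ω ∧ cube Q ⊂ cube (par Q) ∧ ∀ R ∈ ω, cube Q ⊂ cube R → cube (par Q) ⊆ cube R)
    ∨ (par Q = Q ∧ ∀ R ∈ ω, ¬ cube Q ⊂ cube R)

theorem IsStoppingParentFor.mem (hpar : IsStoppingParentFor cube ω par) {Q : ι} (hQ : Q ∈ ω)
    (h : cube Q ⊂ cube (par Q)) : par Q ∈ ω := by
  rcases hpar Q hQ with ⟨hmem, -, -⟩ | ⟨heq, -⟩
  · exact hmem
  · exact absurd (heq ▸ h) (ssubset_irrefl _)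

theorem IsStoppingParentFor.subset (hpar : IsStoppingParentFor cube ω par) {Q R : ι}
    (hQ : Q ∈ ω) (hR : R ∈ ω) (h : cube Q ⊂ cube R) : cube (par Q) ⊆ cube R := by
  rcases hpar Q hQ with ⟨-, -, hmin⟩ | ⟨-, hmax⟩
  · exact hmin R hR h
  · exact absurd h (hmax R hR)

theorem IsStoppingParentFor.eq_self (hpar : IsStoppingParentFor cube ω par) {Q : ι}
    (hQ : Q ∈ ω) (h : ¬ cube Q ⊂ cube (par Q)) : par Q = Q := by
  rcases hpar Q hQ with ⟨-, hst, -⟩ | ⟨heq, -⟩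
  · exact absurd hst h
  · exact heq

theorem IsStoppingParentFor.not_ssubset_of_ssubset_par (hpar : IsStoppingParentFor cube ω par)
    {Q S : ι} (hQ : Q ∈ ω) (hS : S ∈ ω) (hSQ : cube S ⊂ cube (par Q)) : ¬ cube Q ⊂ cube S :=
  fun h => hSQ.not_subset (hpar.subset hQ hS h)

theorem IsStoppingParentFor.mem_of_mem_union_image [DecidableEq ι]
    (hpar : IsStoppingParentFor cube ω par)
    {F : Finset ι} (hF : ∀ Q ∈ F, Q ∈ ω ∧ cube Q ⊂ cube (par Q)) {R : ι}
    (hR : R ∈ F ∪ F.image par) : R ∈ ω := by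
  rcases Finset.mem_union.mp hR with hRF | hRF
  · exact (hF R hRF).1
  · obtain ⟨Q, hQ, rfl⟩ := Finset.mem_image.mp hRF
    exact hpar.mem (hF Q hQ).1 (hF Q hQ).2

variable [MeasurableSpace α] {μ : Measure α}

theorem IsLaminarFamily.pairwiseDisjoint_maximalCubes (hC : IsLaminarFamily μ cube)
    (𝒜 : Finset ι) : (maximalCubes cube 𝒜 : Set ι).PairwiseDisjoint cube := by
  intro R hR R' hR' hne
  rw [Finset.mem_coe, mem_maximalCubes] at hR hR'
  have hcube : cube R ≠ cube R' := hC.injective.ne hne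
  rcases hC.nested_or_disjoint R R' with h | h | h
  · exact absurd (h.ssubset_of_ne hcube) (hR.2 R' hR'.1)
  · exact absurd (h.ssubset_of_ne hcube.symm) (hR'.2 R hR.1)
  · exact h

theorem IsLaminarFamily.nonempty (hC : IsLaminarFamily μ cube) (i : ι) : (cube i).Nonempty :=
  nonempty_of_measure_ne_zero (hC.measure_ne_zero i)

open scoped Classical in
theorem IsLaminarFamily.sum_eq_sum_maximalCubes {κ M : Type*} [AddCommMonoid M]
    (hC : IsLaminarFamily μ cube) {𝒜 : Finset ι} {𝒟 : Finset κ} {g : κ → ι}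
    (hg : ∀ Q ∈ 𝒟, g Q ∈ 𝒜) (f : κ → M) :
    ∑ Q ∈ 𝒟, f Q = ∑ R ∈ maximalCubes cube 𝒜, ∑ Q ∈ 𝒟 with cube (g Q) ⊆ cube R, f Q := by
  rw [← Finset.sum_biUnion]
  · congr 1
    ext Q
    simp only [Finset.mem_biUnion, Finset.mem_filter]
    refine ⟨fun hQ => ?_, fun ⟨_, _, hQ, _⟩ => hQ⟩
    obtain ⟨R, hR, hQR⟩ := exists_mem_maximalCubes_subset (hg Q hQ)
    exact ⟨R, hR, hQ, hQR⟩
  · intro R hR R' hR' hne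
    refine Finset.disjoint_filter.mpr fun Q _ hQR hQR' => ?_
    obtain ⟨x, hx⟩ := hC.nonempty (g Q)
    exact (hC.pairwiseDisjoint_maximalCubes 𝒜 hR hR' hne).ne_of_mem (hQR hx) (hQR' hx) rfl

open scoped Classical in
theorem IsLaminarFamily.sum_filter_ssubset_eq_sum_maximalCubes {M : Type*} [AddCommMonoid M]
    (hC : IsLaminarFamily μ cube) {F 𝒦 : Finset ι} {H : ι}
    (hF𝒦 : ∀ Q ∈ F, cube (par Q) ⊂ cube H → par Q ∈ 𝒦) (h𝒦H : ∀ R ∈ 𝒦, cube R ⊂ cube H)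
    (f : ι → M) :
    ∑ Q ∈ F with cube (par Q) ⊂ cube H, f Q =
      ∑ R ∈ maximalCubes cube 𝒦, ∑ Q ∈ F with cube (par Q) ⊆ cube R, f Q := by
  rw [hC.sum_eq_sum_maximalCubes (g := par) fun Q hQ => hF𝒦 Q (Finset.mem_filter.mp hQ).1
    (Finset.mem_filter.mp hQ).2]
  refine Finset.sum_congr rfl fun R hR => ?_
  rw [Finset.filter_filter]
  congr 1
  exact Finset.filter_congr fun Q _ => and_iff_right_of_imp fun (hQR : cube (par Q) ⊆ cube R) =>
    hQR.trans_ssubset (h𝒦H R (mem_maximalCubes.mp hR).1)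

end Laminar

section StoppingTree

open scoped Classical

variable {α ι : Type*} [MeasurableSpace α] {μ : Measure α} {cube : ι → Set α} {ω : Set ι}
  {par : ι → ι} {u : α → ℝ}

def squareJump (μ : Measure α) (cube : ι → Set α) (par : ι → ι) (u : α → ℝ) (Q : ι) : ℝ :=
  μ.real (cube Q) * ((⨍ x in cube Q, u x ∂μ) - ⨍ x in cube (par Q), u x ∂μ) ^ 2

theorem squareJump_nonneg (Q : ι) : 0 ≤ squareJump μ cube par u Q := by
  unfold squareJump
  positivity

theorem squareJump_add_le_setIntegral_sub_sq (hu : MemLp u 2 μ) {R H : ι}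
    (hR : μ (cube R) ≠ ∞) (hRH : cube (par R) = cube H) {b : ℝ}
    (hb : b ≤ sqDeviation μ u (cube R)) :
    squareJump μ cube par u R + b ≤ ∫ x in cube R, (u x - ⨍ y in cube H, u y ∂μ) ^ 2 ∂μ := by
  rw [squareJump, hRH, setIntegral_sub_const_sq hu hR]
  linarith

theorem sum_squareJump_le_of_forall_ssubset (hC : IsLaminarFamily μ cube)
    (hpar : IsStoppingParentFor cube ω par) (hu : MemLp u 2 μ) {F : Finset ι}
    (hF : ∀ Q ∈ F, Q ∈ ω ∧ cube Q ⊂ cube (par Q)) (H : ι)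
    (ih : ∀ R ∈ F ∪ F.image par, cube R ⊂ cube H →
      ∑ Q ∈ F with cube (par Q) ⊆ cube R, squareJump μ cube par u Q ≤ sqDeviation μ u (cube R)) :
    ∑ Q ∈ F with cube (par Q) ⊆ cube H, squareJump μ cube par u Q ≤
      sqDeviation μ u (cube H) := by
  set 𝒦 := (F ∪ F.image par).filter fun R => cube R ⊂ cube H
  set ℛ := maximalCubes cube 𝒦
  set a := ⨍ x in cube H, u x ∂μ
  have h𝒦 : ∀ R ∈ 𝒦, R ∈ F ∪ F.image par ∧ R ∈ ω ∧ cube R ⊂ cube H := fun R hR =>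
    have hR' := Finset.mem_filter.mp hR
    ⟨hR'.1, hpar.mem_of_mem_union_image hF hR'.1, hR'.2⟩
  have hℛ : ∀ R ∈ ℛ, R ∈ F ∪ F.image par ∧ R ∈ ω ∧ cube R ⊂ cube H :=
    fun R hR => h𝒦 R (mem_maximalCubes.mp hR).1
  -- The children of `H` are maximal in `𝒦`, and every other term sits below a maximal cube.
  set children := {Q ∈ F | cube (par Q) = cube H}
  have hchildren : children ⊆ ℛ := by
    intro Q hQ
    obtain ⟨hQF, hQH⟩ := Finset.mem_filter.mp hQ
    refine mem_maximalCubes.mpr ⟨Finset.mem_filter.mpr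
      ⟨Finset.mem_union_left _ hQF, hQH ▸ (hF Q hQF).2⟩, fun S hS => ?_⟩
    exact hpar.not_ssubset_of_ssubset_par (hF Q hQF).1 (h𝒦 S hS).2.1 (hQH ▸ (h𝒦 S hS).2.2)
  have hbound : ∀ R ∈ ℛ, (if R ∈ children then squareJump μ cube par u R else 0) +
      ∑ Q ∈ F with cube (par Q) ⊆ cube R, squareJump μ cube par u Q ≤
        ∫ x in cube R, (u x - a) ^ 2 ∂μ := by
    intro R hR
    have hih := ih R (hℛ R hR).1 (hℛ R hR).2.2
    split_ifs with hRH
    · exact squareJump_add_le_setIntegral_sub_sq hu (hC.measure_ne_top R)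
        (Finset.mem_filter.mp hRH).2 hih
    · rw [zero_add]
      exact hih.trans (sqDeviation_le_setIntegral_sub_const_sq hu (hC.measure_ne_top R) a)
  calc ∑ Q ∈ F with cube (par Q) ⊆ cube H, squareJump μ cube par u Q
      = ∑ Q ∈ children, squareJump μ cube par u Q +
          ∑ Q ∈ F with cube (par Q) ⊂ cube H, squareJump μ cube par u Q := by
        rw [← Finset.sum_union (Finset.disjoint_filter.mpr fun Q _ h h' => h'.ne h),
          ← Finset.filter_or]
        simp_rw [subset_iff_ssubset_or_eq, or_comm]
    _ = ∑ R ∈ ℛ, ((if R ∈ children then squareJump μ cube par u R else 0) +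
          ∑ Q ∈ F with cube (par Q) ⊆ cube R, squareJump μ cube par u Q) := by
        rw [Finset.sum_add_distrib, Finset.sum_ite_mem, Finset.inter_eq_right.mpr hchildren,
          hC.sum_filter_ssubset_eq_sum_maximalCubes (fun Q hQ hQH => Finset.mem_filter.mpr
            ⟨Finset.mem_union_right _ (Finset.mem_image_of_mem par hQ), hQH⟩)
            fun R hR => (h𝒦 R hR).2.2]
    _ ≤ ∑ R ∈ ℛ, ∫ x in cube R, (u x - a) ^ 2 ∂μ := Finset.sum_le_sum hbound
    _ ≤ sqDeviation μ u (cube H) :=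
        sum_setIntegral_le_setIntegral (integrableOn_sub_const_sq hu (hC.measure_ne_top H) a)
          (fun x => sq_nonneg _) (fun R _ => hC.measurableSet R)
          (hC.pairwiseDisjoint_maximalCubes _) fun R hR => (hℛ R hR).2.2.subset

theorem sum_squareJump_le_sqDeviation (hC : IsLaminarFamily μ cube)
    (hpar : IsStoppingParentFor cube ω par) (hu : MemLp u 2 μ) {F : Finset ι}
    (hF : ∀ Q ∈ F, Q ∈ ω ∧ cube Q ⊂ cube (par Q)) (H : ι) :
    ∑ Q ∈ F with cube (par Q) ⊆ cube H, squareJump μ cube par u Q ≤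
      sqDeviation μ u (cube H) := by
  set below := fun H => (F ∪ F.image par).filter fun K => cube K ⊂ cube H
  induction H using (measure fun H => (below H).card).wf.induction with
  | h H ih =>
    refine sum_squareJump_le_of_forall_ssubset hC hpar hu hF H fun R hR hRH => ih R ?_
    refine Finset.card_lt_card ((Finset.ssubset_iff_of_subset ?_).mpr
      ⟨R, Finset.mem_filter.mpr ⟨hR, hRH⟩, fun h => (Finset.mem_filter.mp h).2.ne rfl⟩)
    exact Finset.monotone_filter_right _ fun K _ hK => hK.trans hRH

theorem sum_squareJump_le_integral_sq (hC : IsLaminarFamily μ cube)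
    (hpar : IsStoppingParentFor cube ω par) (hu : MemLp u 2 μ) {F : Finset ι}
    (hF : ∀ Q ∈ F, Q ∈ ω ∧ cube Q ⊂ cube (par Q)) :
    ∑ Q ∈ F, squareJump μ cube par u Q ≤ ∫ x, u x ^ 2 ∂μ := by
  have hu0 : IntegrableOn (fun x => (u x - 0) ^ 2) univ μ := by
    simpa using hu.integrable_sq
  calc ∑ Q ∈ F, squareJump μ cube par u Q
      = ∑ R ∈ maximalCubes cube (F.image par),
          ∑ Q ∈ F with cube (par Q) ⊆ cube R, squareJump μ cube par u Q :=
        hC.sum_eq_sum_maximalCubes (fun Q hQ => Finset.mem_image_of_mem par hQ) _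
    _ ≤ ∑ R ∈ maximalCubes cube (F.image par), ∫ x in cube R, (u x - 0) ^ 2 ∂μ :=
        Finset.sum_le_sum fun R _ => (sum_squareJump_le_sqDeviation hC hpar hu hF R).trans
          (sqDeviation_le_setIntegral_sub_const_sq hu (hC.measure_ne_top R) 0)
    _ ≤ ∫ x in univ, (u x - 0) ^ 2 ∂μ :=
        sum_setIntegral_le_setIntegral hu0 (fun x => sq_nonneg _) (fun R _ => hC.measurableSet R)
          (hC.pairwiseDisjoint_maximalCubes _) fun R _ => subset_univ _
    _ = ∫ x, u x ^ 2 ∂μ := by simp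

end StoppingTree

section StoppedSquareFunction

variable {α ι : Type*} [MeasurableSpace α] {μ : Measure α} {cube : ι → Set α} {ω : Set ι}
  {par : ι → ι} {u : α → ℝ}

-- `Ssq n` is the case `μ = volume`, `cube = Function.uncurry (dyadic n)`.
def stoppedSquareFunctionSq (μ : Measure α) (cube : ι → Set α) (ω : Set ι) (par : ι → ι)
    (u : α → ℝ) (x : α) : ℝ≥0∞ :=
  ∑' Q : ω, (cube Q).indicator
    (fun _ => ENNReal.ofReal (((⨍ y in cube Q, u y ∂μ) - ⨍ y in cube (par Q), u y ∂μ) ^ 2)) x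

theorem ofReal_integral_sq_eq_lintegral (hu : MemLp u 2 μ) :
    ENNReal.ofReal (∫ x, u x ^ 2 ∂μ) = ∫⁻ x, (‖u x‖₊ : ℝ≥0∞) ^ 2 ∂μ := by
  rw [ofReal_integral_eq_lintegral_ofReal hu.integrable_sq (ae_of_all _ fun x => sq_nonneg _)]
  refine lintegral_congr fun x => ?_
  rw [← sq_abs, ENNReal.ofReal_pow (abs_nonneg _), ← Real.enorm_eq_ofReal_abs, enorm_eq_nnnorm]

theorem stoppedSquareFunctionSq_eq_zero (h : ∀ Q ∈ ω, par Q = Q) (x : α) :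
    stoppedSquareFunctionSq μ cube ω par u x = 0 := by
  refine ENNReal.tsum_eq_zero.mpr fun Q => ?_
  simp [h Q Q.2]

theorem lintegral_indicator_eq_ofReal_squareJump (hC : IsLaminarFamily μ cube) (Q : ι) :
    ∫⁻ x, (cube Q).indicator
      (fun _ => ENNReal.ofReal (((⨍ y in cube Q, u y ∂μ) - ⨍ y in cube (par Q), u y ∂μ) ^ 2)) x ∂μ =
      ENNReal.ofReal (squareJump μ cube par u Q) := by
  rw [lintegral_indicator_const (hC.measurableSet Q), squareJump,
    ENNReal.ofReal_mul measureReal_nonneg, Measure.real,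
    ENNReal.ofReal_toReal (hC.measure_ne_top Q), mul_comm]

theorem lintegral_stoppedSquareFunctionSq_le [Countable ι] (hC : IsLaminarFamily μ cube)
    (hpar : IsStoppingParentFor cube ω par) (hu : MemLp u 2 μ) :
    ∫⁻ x, stoppedSquareFunctionSq μ cube ω par u x ∂μ ≤ ∫⁻ x, (‖u x‖₊ : ℝ≥0∞) ^ 2 ∂μ := by
  classical
  unfold stoppedSquareFunctionSq
  rw [← ofReal_integral_sq_eq_lintegral hu,
    lintegral_tsum fun Q => (measurable_const.indicator (hC.measurableSet _)).aemeasurable]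
  simp_rw [lintegral_indicator_eq_ofReal_squareJump hC]
  refine ENNReal.summable.tsum_le_of_sum_le fun s => ?_
  set F := s.map (Function.Embedding.subtype (· ∈ ω))
  have hF : ∀ Q ∈ F, Q ∈ ω := fun Q hQ => by
    obtain ⟨Q, -, rfl⟩ := Finset.mem_map.mp hQ
    exact Q.2
  have hjump : ∀ Q ∈ F, squareJump μ cube par u Q ≠ 0 → cube Q ⊂ cube (par Q) := by
    intro Q hQ hne
    by_contra hQp
    rw [squareJump, hpar.eq_self (hF Q hQ) hQp, sub_self] at hne
    simp at hne
  calc ∑ Q ∈ s, ENNReal.ofReal (squareJump μ cube par u Q)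
      = ENNReal.ofReal (∑ Q ∈ F with cube Q ⊂ cube (par Q), squareJump μ cube par u Q) := by
        rw [Finset.sum_filter_of_ne hjump, Finset.sum_map,
          ENNReal.ofReal_sum_of_nonneg fun Q _ => squareJump_nonneg _]
        rfl
    _ ≤ ENNReal.ofReal (∫ x, u x ^ 2 ∂μ) := by
        refine ENNReal.ofReal_le_ofReal (sum_squareJump_le_integral_sq hC hpar hu fun Q hQ => ?_)
        obtain ⟨hQF, hQp⟩ := Finset.mem_filter.mp hQ
        exact ⟨hF Q hQF, hQp⟩

end StoppedSquareFunction

section Dyadic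

variable {n : ℕ}

theorem mem_dyadic_iff_floor {k : ℤ} {m : Fin n → ℤ} {x : Fin n → ℝ} :
    x ∈ dyadic n k m ↔ ∀ i, ⌊x i * 2 ^ k⌋ = m i := by
  have h2 : (0 : ℝ) < 2 ^ k := zpow_pos two_pos k
  simp only [dyadic, mem_ofPred_eq, Int.floor_eq_iff, zpow_neg, ← div_eq_mul_inv,
    div_le_iff₀ h2, lt_div_iff₀ h2]

theorem dyadic_subset_dyadic_div {k k' : ℤ} (hk : k ≤ k') (m : Fin n → ℤ) :
    dyadic n k' m ⊆ dyadic n k fun i => m i / 2 ^ (k' - k).toNat := by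
  intro x hx
  rw [mem_dyadic_iff_floor] at hx ⊢
  intro i
  have : x i * 2 ^ k = x i * 2 ^ k' / ((2 ^ (k' - k).toNat : ℕ) : ℝ) := by
    rw [Nat.cast_pow, Nat.cast_ofNat, ← zpow_natCast, Int.toNat_of_nonneg (by omega),
      mul_div_assoc, ← zpow_sub₀ two_ne_zero]
    ring_nf
  rw [this, Int.floor_div_natCast, hx i]
  norm_cast

theorem dyadic_subset_of_le_of_mem {k k' : ℤ} (hk : k ≤ k') {m m' : Fin n → ℤ} {x : Fin n → ℝ}
    (hx : x ∈ dyadic n k m) (hx' : x ∈ dyadic n k' m') : dyadic n k' m' ⊆ dyadic n k m := by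
  have hm : m = fun i => m' i / 2 ^ (k' - k).toNat := by
    ext i
    rw [mem_dyadic_iff_floor] at hx
    rw [← hx i, ← mem_dyadic_iff_floor.mp (dyadic_subset_dyadic_div hk m' hx') i]
  exact hm ▸ dyadic_subset_dyadic_div hk m'

theorem dyadic_nested_or_disjoint (k k' : ℤ) (m m' : Fin n → ℤ) :
    dyadic n k m ⊆ dyadic n k' m' ∨ dyadic n k' m' ⊆ dyadic n k m ∨
      Disjoint (dyadic n k m) (dyadic n k' m') := by
  by_cases hd : Disjoint (dyadic n k m) (dyadic n k' m')
  · exact .inr (.inr hd)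
  obtain ⟨x, hx, hx'⟩ := not_disjoint_iff.mp hd
  rcases le_total k k' with hk | hk
  · exact .inr (.inl (dyadic_subset_of_le_of_mem hk hx hx'))
  · exact .inl (dyadic_subset_of_le_of_mem hk hx' hx)

theorem dyadic_eq_pi (k : ℤ) (m : Fin n → ℤ) :
    dyadic n k m = univ.pi fun i => Ico ((m i : ℝ) * 2 ^ (-k)) ((m i + 1) * 2 ^ (-k)) := by
  ext x
  simp [dyadic]

theorem measurableSet_dyadic (k : ℤ) (m : Fin n → ℤ) : MeasurableSet (dyadic n k m) := by
  rw [dyadic_eq_pi]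
  exact .univ_pi fun _ => measurableSet_Ico

theorem volume_dyadic (k : ℤ) (m : Fin n → ℤ) :
    volume (dyadic n k m) = ENNReal.ofReal (2 ^ (-k)) ^ n := by
  simp_rw [dyadic_eq_pi, volume_pi_pi, Real.volume_Ico, ← sub_mul, add_sub_cancel_left, one_mul,
    Finset.prod_const, Finset.card_univ, Fintype.card_fin]

theorem dyadic_zero_eq_univ (k : ℤ) (m : Fin 0 → ℤ) : dyadic 0 k m = univ := by
  ext x
  simp [dyadic]

theorem dyadic_nonempty (k : ℤ) (m : Fin n → ℤ) : (dyadic n k m).Nonempty :=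
  ⟨fun i => m i * 2 ^ (-k), mem_dyadic_iff_floor.mpr fun i => by
    rw [zpow_neg, inv_mul_cancel_right₀ (zpow_ne_zero _ two_ne_zero), Int.floor_intCast]⟩

theorem dyadic_injective (hn : 0 < n) : Function.Injective (Function.uncurry (dyadic n)) := by
  rintro ⟨k, m⟩ ⟨k', m'⟩ h
  simp only [Function.uncurry_apply_pair] at h
  have hk : k = k' := by
    have := congrArg volume h
    simp only [volume_dyadic] at this
    have h2 : ∀ j : ℤ, (0 : ℝ) ≤ 2 ^ (-j) := fun j => by positivity
    rw [← ENNReal.ofReal_pow (h2 k), ← ENNReal.ofReal_pow (h2 k'),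
      ENNReal.ofReal_eq_ofReal_iff (pow_nonneg (h2 k) n) (pow_nonneg (h2 k') n),
      pow_left_inj₀ (h2 k) (h2 k') hn.ne'] at this
    have := zpow_right_injective₀ two_pos (by norm_num : (2:ℝ) ≠ 1) this
    omega
  subst hk
  obtain ⟨x, hx⟩ := dyadic_nonempty k m
  have hx' := h ▸ hx
  rw [mem_dyadic_iff_floor] at hx hx'
  exact Prod.ext rfl (funext fun i => (hx i).symm.trans (hx' i))

theorem isLaminarFamily_dyadic (hn : 0 < n) :
    IsLaminarFamily volume (Function.uncurry (dyadic n)) where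
  injective := dyadic_injective hn
  nested_or_disjoint Q R := dyadic_nested_or_disjoint Q.1 R.1 Q.2 R.2
  measurableSet Q := measurableSet_dyadic Q.1 Q.2
  measure_ne_zero Q := by
    rw [Function.uncurry_def, volume_dyadic]
    exact pow_ne_zero _ (ENNReal.ofReal_pos.mpr (by positivity)).ne'
  measure_ne_top Q := by
    rw [Function.uncurry_def, volume_dyadic]
    exact pow_ne_top ofReal_ne_top

end Dyadic

/-- `‖S_{ω_*}u‖_{L²} ≲ ‖u‖_{L²}`, uniformly in the collection `ω_*`. -/
theorem stmt4 (n : ℕ) :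
    ∃ C : ℝ≥0∞, C ≠ ⊤ ∧
      ∀ (ω : Set (ℤ × (Fin n → ℤ))) (par : ℤ × (Fin n → ℤ) → ℤ × (Fin n → ℤ)),
        IsStoppingParent n ω par →
        ∀ u : (Fin n → ℝ) → ℝ, MemLp u 2 volume →
          ∫⁻ x, Ssq n ω par u x ≤ C * ∫⁻ x, (‖u x‖₊ : ℝ≥0∞) ^ 2 := by
  refine ⟨1, one_ne_top, fun ω par hpar u hu => ?_⟩
  rw [one_mul]
  rcases n.eq_zero_or_pos with rfl | hn
  · -- all cubes are `univ`, so `Function.uncurry (dyadic 0)` is not injective, but no term survives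
    have hpar_eq : ∀ Q ∈ ω, par Q = Q := fun Q hQ =>
      IsStoppingParentFor.eq_self (cube := Function.uncurry (dyadic 0)) hpar hQ
        (by simp [Function.uncurry_def, dyadic_zero_eq_univ])
    have hS : ∀ x, Ssq 0 ω par u x = 0 :=
      stoppedSquareFunctionSq_eq_zero (μ := volume) (cube := Function.uncurry (dyadic 0)) hpar_eq
    simp only [hS, lintegral_zero, zero_le]
  · exact lintegral_stoppedSquareFunctionSq_le (isLaminarFamily_dyadic hn) hpar hu
end
end

section
/- If u is covered along a chain: with δ ≤ 1/2, suppose Q_0 is covered by Q_1, which is covered by Q_2, ..., ending in an uncovered Q_k, where 'Q_j covered by Q_{j+1}' means ℓ(Q_{j+1}) − δ^{−1}dist(Q_j, Q_{j+1}) > ℓ(Q_j) (implying ℓ(Q_j) ≤ δℓ(Q_{j+1}) and dist(Q_j,Q_{j+1}) < δℓ(Q_{j+1})). Then Q_0 ⊂ 5Q_k. -/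
open MeasureTheory Set ENNReal

noncomputable section

/-- A cube of the sparsified grid `D^δ`, `δ = 2^{-N}`: generation `k` has side `δ^k`. -/
def cubeδ (n N : ℕ) (k : ℤ) (m : Fin n → ℤ) : Set (Fin n → ℝ) :=
  dyadic n ((N : ℤ) * k) m

/-- Side length of a generation-`k` cube of the grid `D^δ`. -/
def sideδ (N : ℕ) (k : ℤ) : ℝ := 2 ^ (-(N : ℤ) * k)

/-- Distance between two sets. -/
def sdist {n : ℕ} (A B : Set (Fin n → ℝ)) : ℝ :=
  (⨅ a ∈ A, ⨅ b ∈ B, edist a b).toReal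

/-- The concentric dilate, by the factor `θ`, of the grid cube indexed by `(k, m)`. -/
def dilateδ (n N : ℕ) (k : ℤ) (m : Fin n → ℤ) (θ : ℝ) : Set (Fin n → ℝ) :=
  {x | ∀ i, |x i - ((m i : ℝ) + 1/2) * sideδ N k| ≤ θ * sideδ N k / 2}

lemma cubeδ_nonempty (n N : ℕ) (k : ℤ) (m : Fin n → ℤ) : (cubeδ n N k m).Nonempty := by
  refine ⟨fun i => (m i : ℝ) * 2 ^ (-((N:ℤ) * k)), fun i => ?_⟩
  have h : (0:ℝ) < 2 ^ (-((N:ℤ)*k)) := by positivity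
  refine ⟨le_refl _, ?_⟩
  show (m i : ℝ) * 2 ^ (-((N:ℤ)*k)) < ((m i : ℝ) + 1) * 2 ^ (-((N:ℤ)*k))
  nlinarith [h]

lemma mem_cubeδ_bounds {n N : ℕ} {k : ℤ} {m : Fin n → ℤ} {y : Fin n → ℝ}
    (hy : y ∈ cubeδ n N k m) (i : Fin n) :
    (m i : ℝ) * sideδ N k ≤ y i ∧ y i < ((m i : ℝ) + 1) * sideδ N k := by
  have := hy i
  simpa [sideδ, neg_mul] using this

lemma cubeδ_diam {n N : ℕ} {k : ℤ} {m : Fin n → ℤ} {y a : Fin n → ℝ}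
    (hy : y ∈ cubeδ n N k m) (ha : a ∈ cubeδ n N k m) :
    dist y a ≤ sideδ N k := by
  have hs : (0:ℝ) ≤ sideδ N k := by unfold sideδ; positivity
  rw [dist_pi_le_iff hs]
  intro i
  obtain ⟨h1, h2⟩ := mem_cubeδ_bounds hy i
  obtain ⟨h3, h4⟩ := mem_cubeδ_bounds ha i
  rw [Real.dist_eq, abs_le]
  constructor <;> nlinarith

lemma sdist_lt {n : ℕ} {A B : Set (Fin n → ℝ)} (hA : A.Nonempty) (hB : B.Nonempty)
    {ε : ℝ} (hε : 0 < ε) : ∃ a ∈ A, ∃ b ∈ B, dist a b < sdist A B + ε := by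
  obtain ⟨a0, ha0⟩ := hA
  obtain ⟨b0, hb0⟩ := hB
  set T : ℝ≥0∞ := ⨅ a ∈ A, ⨅ b ∈ B, edist a b with hT
  have hTle : T ≤ edist a0 b0 := by
    calc T ≤ ⨅ b ∈ B, edist a0 b := biInf_le _ ha0
      _ ≤ edist a0 b0 := biInf_le _ hb0
  have hTtop : T ≠ ⊤ := ne_top_of_le_ne_top (edist_ne_top a0 b0) hTle
  have hεnn : ENNReal.ofReal ε ≠ 0 := by
    simp [ENNReal.ofReal_eq_zero, not_le, hε]
  have hlt : T < T + ENNReal.ofReal ε :=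
    ENNReal.lt_add_right hTtop hεnn
  rw [hT] at hlt
  rw [iInf_lt_iff] at hlt
  obtain ⟨a, hlt⟩ := hlt
  rw [iInf_lt_iff] at hlt
  obtain ⟨ha, hlt⟩ := hlt
  rw [iInf_lt_iff] at hlt
  obtain ⟨b, hlt⟩ := hlt
  rw [iInf_lt_iff] at hlt
  obtain ⟨hb, hlt⟩ := hlt
  refine ⟨a, ha, b, hb, ?_⟩
  have h1 : dist a b = (edist a b).toReal := dist_edist a b
  have h2 : (edist a b).toReal < (T + ENNReal.ofReal ε).toReal := by
    exact (ENNReal.toReal_lt_toReal (edist_ne_top a b)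
      (ENNReal.add_ne_top.mpr ⟨hTtop, ENNReal.ofReal_ne_top⟩)).mpr hlt
  rw [ENNReal.toReal_add hTtop ENNReal.ofReal_ne_top, ENNReal.toReal_ofReal hε.le] at h2
  rw [h1]
  exact h2

/-- if `Q_0` is covered by `Q_1`, which is covered by `Q_2`, ..., up to `Q_k`
(`Q_j` covered by `Q_{j+1}` meaning `ℓ(Q_{j+1}) − δ⁻¹ dist(Q_j, Q_{j+1}) > ℓ(Q_j)`), with
`δ = 2^{-N} ≤ 1/2`, then `Q_0 ⊂ 5 Q_k`. -/
theorem stmt12 (n N : ℕ) (hN : 0 < N) (k : ℕ) (Q : ℕ → ℤ × (Fin n → ℤ))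
    (hcov : ∀ j < k,
      sideδ N (Q j).1 <
        sideδ N (Q (j+1)).1 -
          2 ^ (N : ℕ) * sdist (cubeδ n N (Q j).1 (Q j).2) (cubeδ n N (Q (j+1)).1 (Q (j+1)).2)) :
    cubeδ n N (Q 0).1 (Q 0).2 ⊆ dilateδ n N (Q k).1 (Q k).2 5 := by
  intro x hx
  set δ : ℝ := 2 ^ (-(N:ℤ)) with hδdef
  have hδpos : 0 < δ := by rw [hδdef]; positivity
  have hδle : δ ≤ 1/2 := by
    rw [hδdef]
    have : (2:ℝ) ^ (-(N:ℤ)) ≤ 2 ^ (-1:ℤ) := by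
      apply zpow_le_zpow_right₀ one_le_two
      omega
    simpa using this
  set s : ℕ → ℝ := fun j => sideδ N (Q j).1 with hsdef
  have hspos : ∀ j, 0 < s j := fun j => by
    show (0:ℝ) < 2 ^ (-(N:ℤ) * (Q j).1); positivity
  set D : ℕ → ℝ := fun j =>
    sdist (cubeδ n N (Q j).1 (Q j).2) (cubeδ n N (Q (j+1)).1 (Q (j+1)).2) with hDdef
  have hDnn : ∀ j, 0 ≤ D j := fun j => ENNReal.toReal_nonneg
  have h2N : (0:ℝ) < 2 ^ (N:ℕ) := by positivity
  -- s j ≤ δ * s (j+1) for j < k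
  have hstep : ∀ j < k, s j ≤ δ * s (j+1) := by
    intro j hj
    have h1 := hcov j hj
    have hD := hDnn j
    have hlt : s j < s (j+1) := by
      have : 0 ≤ 2 ^ (N:ℕ) * D j := by positivity
      calc s j < s (j+1) - 2 ^ (N:ℕ) * D j := h1
        _ ≤ s (j+1) := by linarith
    have hlt' : (2:ℝ) ^ (-(N:ℤ) * (Q j).1) < 2 ^ (-(N:ℤ) * (Q (j+1)).1) := hlt
    have hexp : -(N:ℤ) * (Q j).1 < -(N:ℤ) * (Q (j+1)).1 :=
      (zpow_lt_zpow_iff_right₀ (by norm_num : (1:ℝ) < 2)).mp hlt'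
    have hk : (Q (j+1)).1 < (Q j).1 := by
      have hN' : (0:ℤ) < (N:ℤ) := by exact_mod_cast hN
      nlinarith [hexp]
    have hexp2 : -(N:ℤ) * (Q j).1 ≤ -(N:ℤ) + -(N:ℤ) * (Q (j+1)).1 := by
      have hN' : (0:ℤ) < (N:ℤ) := by exact_mod_cast hN
      have : (Q (j+1)).1 + 1 ≤ (Q j).1 := by omega
      nlinarith
    calc s j = (2:ℝ) ^ (-(N:ℤ) * (Q j).1) := rfl
      _ ≤ 2 ^ (-(N:ℤ) + -(N:ℤ) * (Q (j+1)).1) := zpow_le_zpow_right₀ one_le_two hexp2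
      _ = δ * s (j+1) := by rw [zpow_add₀ (two_ne_zero)]; rfl
  -- D j ≤ δ * s (j+1) for j < k
  have hDstep : ∀ j < k, D j ≤ δ * s (j+1) := by
    intro j hj
    have h1 := hcov j hj
    have h2 : 2 ^ (N:ℕ) * D j < s (j+1) := by
      have := hspos j; linarith
    have hmul : (2:ℝ) ^ (N:ℕ) * δ = 1 := by
      rw [hδdef, ← zpow_natCast (2:ℝ) N, ← zpow_add₀ (two_ne_zero)]
      simp
    nlinarith [h2, hspos (j+1)]
  -- main induction
  have main : ∀ j ≤ k, ∀ ε > 0, ∃ y ∈ cubeδ n N (Q j).1 (Q j).2,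
      dist x y < 2 * s j * (1 - δ ^ j) + ε := by
    intro j
    induction j with
    | zero =>
      intro _ ε hε
      refine ⟨x, hx, ?_⟩
      simp only [pow_zero, sub_self, mul_zero, zero_add, dist_self]
      exact hε
    | succ j ih =>
      intro hj ε hε
      obtain ⟨y, hy, hdy⟩ := ih (by omega) (ε/2) (by linarith)
      obtain ⟨a, ha, b, hb, hab⟩ :=
        sdist_lt (cubeδ_nonempty n N (Q j).1 (Q j).2)
          (cubeδ_nonempty n N (Q (j+1)).1 (Q (j+1)).2) (show (0:ℝ) < ε/2 by linarith)
      refine ⟨b, hb, ?_⟩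
      have h4 : dist x b ≤ dist x y + dist y a + dist a b := dist_triangle4 x y a b
      have hya : dist y a ≤ s j := cubeδ_diam hy ha
      have h5 : s j ≤ δ * s (j+1) := hstep j (by omega)
      have h6 : D j ≤ δ * s (j+1) := hDstep j (by omega)
      have ht0 : (0:ℝ) < δ ^ j := pow_pos hδpos j
      have ht1 : δ ^ j ≤ 1 := pow_le_one₀ hδpos.le (by linarith)
      have hs' : 0 < s (j+1) := hspos (j+1)
      have key : 2 * s j * (1 - δ ^ j) + s j + D j ≤ 2 * s (j+1) * (1 - δ ^ (j+1)) := by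
        have hpow : δ ^ (j+1) = δ * δ ^ j := by ring
        rw [hpow]
        nlinarith [mul_pos hs' ht0, mul_nonneg hs'.le (sub_nonneg.mpr ht1),
          mul_nonneg (mul_nonneg hs'.le (sub_nonneg.mpr ht1)) (by linarith : (0:ℝ) ≤ 1 - 2*δ)]
      calc dist x b ≤ dist x y + dist y a + dist a b := h4
        _ < (2 * s j * (1 - δ ^ j) + ε/2) + s j + (D j + ε/2) := by
            have : dist a b < D j + ε/2 := hab
            linarith
        _ ≤ 2 * s (j+1) * (1 - δ ^ (j+1)) + ε := by linarith
  -- conclude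
  intro i
  have hεgoal : ∀ ε > 0,
      |x i - (((Q k).2 i : ℝ) + 1/2) * sideδ N (Q k).1| ≤ 5 * sideδ N (Q k).1 / 2 + ε := by
    intro ε hε
    obtain ⟨y, hy, hdy⟩ := main k le_rfl ε hε
    obtain ⟨h1, h2⟩ := mem_cubeδ_bounds hy i
    have hcoord : dist (x i) (y i) ≤ dist x y := dist_le_pi_dist x y i
    have habs : |x i - y i| ≤ dist x y := by rw [← Real.dist_eq]; exact hcoord
    have hyc : |y i - (((Q k).2 i : ℝ) + 1/2) * sideδ N (Q k).1| ≤ sideδ N (Q k).1 / 2 := by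
      rw [abs_le]; constructor <;> nlinarith [hspos k]
    have htri : |x i - (((Q k).2 i : ℝ) + 1/2) * sideδ N (Q k).1| ≤
        |x i - y i| + |y i - (((Q k).2 i : ℝ) + 1/2) * sideδ N (Q k).1| := by
      have := abs_sub_le (x i) (y i) ((((Q k).2 i : ℝ) + 1/2) * sideδ N (Q k).1)
      linarith [this]
    have ht0 : (0:ℝ) < δ ^ k := pow_pos hδpos k
    have hsk : 2 * s k * (1 - δ ^ k) ≤ 2 * s k := by
      nlinarith [hspos k]
    have hss : s k = sideδ N (Q k).1 := rfl
    rw [← hss]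
    linarith
  by_contra hcon
  push_neg at hcon
  have := hεgoal ((|x i - (((Q k).2 i : ℝ) + 1/2) * sideδ N (Q k).1| -
      5 * sideδ N (Q k).1 / 2) / 2) (by linarith)
  linarith
end
end

section
/- Control of u on graph regions via the truncated maximal function of Nu: For any dyadic cube Q and the graph domain Γ_Q := {(t,x) : t > δℓ(Q) + dist(x,Q)}, if the aperture of the non-tangential maximal function N is at least δ^{−1}, then sup_{Γ_Q} |u| ≤ M_{D^δ}(Nu)(Q). -/
open MeasureTheory Set ENNReal

noncomputable section

/-- The non-tangential maximal function with aperture `α`: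
`Nu(x) = ess sup_{|y−x|<αt} |u(t,y)|` (`ℝ≥0∞`-valued). -/
def ntMax (n : ℕ) (α : ℝ) (u : ℝ × (Fin n → ℝ) → ℝ) (x : Fin n → ℝ) : ℝ≥0∞ :=
  essSup (fun p => (‖u p‖₊ : ℝ≥0∞))
    (volume.restrict {p : ℝ × (Fin n → ℝ) | 0 < p.1 ∧ dist p.2 x < α * p.1})

/-- The graph domain `Γ_Q = {(t,x) : t > δℓ(Q) + dist(x,Q)}` above the grid cube `Q`. -/
def graphDom (n N : ℕ) (k : ℤ) (m : Fin n → ℤ) : Set (ℝ × (Fin n → ℝ)) :=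
  {p | (2 : ℝ) ^ (-(N : ℤ)) * sideδ N k + Metric.infDist p.2 (cubeδ n N k m) < p.1}

/-- Truncated grid maximal function of an `ℝ≥0∞`-valued function at the grid cube `(k, m)`:
the supremum of its averages over grid cubes containing it. -/
def maxDQδ (n N : ℕ) (F : (Fin n → ℝ) → ℝ≥0∞) (k : ℤ) (m : Fin n → ℤ) : ℝ≥0∞ :=
  ⨆ (k' : ℤ) (m' : Fin n → ℤ) (_ : cubeδ n N k m ⊆ cubeδ n N k' m'),
    (∫⁻ y in cubeδ n N k' m', F y) / volume (cubeδ n N k' m')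

/-- if the aperture of `N` is at least `δ⁻¹ = 2^N`, then
`sup_{Γ_Q} |u| ≤ M_{D^δ}(Nu)(Q)`. -/
theorem stmt13 (n N : ℕ) (hn : 0 < n) (hN : 0 < N) (α : ℝ) (hα : (2 : ℝ) ^ (N : ℕ) ≤ α)
    (u : ℝ × (Fin n → ℝ) → ℝ) (k : ℤ) (m : Fin n → ℤ) :
    essSup (fun p => (‖u p‖₊ : ℝ≥0∞)) (volume.restrict (graphDom n N k m))
      ≤ maxDQδ n N (ntMax n α u) k m := by
  classical
  set Q := cubeδ n N k m with hQ
  set s : ℝ := sideδ N k with hs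
  have hspos : 0 < s := by
    rw [hs, sideδ]; positivity
  -- cube as a product of Ico's
  have hQeq : Q = Set.univ.pi (fun i => Set.Ico ((m i : ℝ) * s) ((m i : ℝ) * s + s)) := by
    ext x
    simp only [hQ, cubeδ, dyadic, Set.mem_setOf_eq, Set.mem_pi, Set.mem_univ, Set.mem_Ico,
      forall_true_left, hs, sideδ, neg_mul]
    exact forall_congr' fun i => by constructor <;> intro h <;>
      [exact ⟨h.1, by linarith [h.2, (by ring : ((m i : ℝ) + 1) * 2 ^ (-((N:ℤ) * k)) = (m i : ℝ) * 2 ^ (-((N:ℤ)*k)) + 2 ^ (-((N:ℤ)*k)))]⟩;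
       exact ⟨h.1, by linarith [h.2, (by ring : ((m i : ℝ) + 1) * 2 ^ (-((N:ℤ) * k)) = (m i : ℝ) * 2 ^ (-((N:ℤ)*k)) + 2 ^ (-((N:ℤ)*k)))]⟩]
  have hQmeas : MeasurableSet Q := by
    rw [hQeq]; exact MeasurableSet.univ_pi fun i => measurableSet_Ico
  have hvol : volume Q = ENNReal.ofReal s ^ n := by
    rw [hQeq, volume_pi_pi]
    simp [Real.volume_Ico]
  have hvol0 : volume Q ≠ 0 := by
    rw [hvol]
    exact pow_ne_zero _ (by simpa using hspos)
  have hvoltop : volume Q ≠ ⊤ := by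
    rw [hvol]; exact pow_ne_top ofReal_ne_top
  set C := essSup (fun p => (‖u p‖₊ : ℝ≥0∞)) (volume.restrict (graphDom n N k m)) with hC
  -- size of points within the cube
  have hdistQ : ∀ x ∈ Q, ∀ q ∈ Q, dist q x ≤ s := by
    intro x hx q hq
    rw [hQeq] at hx hq
    refine dist_pi_le_iff hspos.le |>.2 fun i => ?_
    have h1 := hx i (Set.mem_univ i); have h2 := hq i (Set.mem_univ i)
    simp only [Set.mem_Ico] at h1 h2
    rw [Real.dist_eq, abs_le]
    constructor <;> linarith
  -- graph domain within each cone
  have hsub : ∀ x ∈ Q, graphDom n N k m ⊆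
      {p : ℝ × (Fin n → ℝ) | 0 < p.1 ∧ dist p.2 x < α * p.1} := by
    intro x hx p hp
    have hδ : (0:ℝ) < (2:ℝ) ^ (-(N:ℤ)) := by positivity
    have hd0 : 0 ≤ Metric.infDist p.2 Q := Metric.infDist_nonneg
    have hp' : (2:ℝ) ^ (-(N:ℤ)) * s + Metric.infDist p.2 Q < p.1 := hp
    have hpt : 0 < p.1 := lt_of_le_of_lt (by positivity) hp'
    refine ⟨hpt, ?_⟩
    obtain ⟨q, hq, hdq⟩ := (Metric.infDist_lt_iff ⟨x, hx⟩).1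
      (show Metric.infDist p.2 Q < p.1 - (2:ℝ) ^ (-(N:ℤ)) * s by linarith)
    have h2N : (1:ℝ) ≤ (2:ℝ) ^ (N:ℕ) := one_le_pow₀ (by norm_num)
    have hδs : (2:ℝ) ^ (-(N:ℤ)) * (2:ℝ) ^ (N:ℕ) = 1 := by
      rw [← zpow_natCast (2:ℝ) N, ← zpow_add₀ (by norm_num : (2:ℝ) ≠ 0)]
      simp
    have hkey : p.1 - (2:ℝ) ^ (-(N:ℤ)) * s + s ≤ α * p.1 := by
      have h1 : ((2:ℝ) ^ (N:ℕ) - 1) * ((2:ℝ) ^ (-(N:ℤ)) * s) ≤ ((2:ℝ) ^ (N:ℕ) - 1) * p.1 := by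
        apply mul_le_mul_of_nonneg_left _ (by linarith)
        linarith
      have h2 : ((2:ℝ) ^ (N:ℕ) - 1) * ((2:ℝ) ^ (-(N:ℤ)) * s) = s - (2:ℝ) ^ (-(N:ℤ)) * s := by
        have := hδs; nlinarith [hδs]
      have h3 : (2:ℝ) ^ (N:ℕ) * p.1 ≤ α * p.1 :=
        mul_le_mul_of_nonneg_right hα hpt.le
      nlinarith
    calc dist p.2 x ≤ dist p.2 q + dist q x := dist_triangle _ _ _
      _ ≤ dist p.2 q + s := by linarith [hdistQ x hx q hq]
      _ < (p.1 - (2:ℝ) ^ (-(N:ℤ)) * s) + s := by linarith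
      _ ≤ α * p.1 := hkey
  -- C ≤ Nu(x) for x ∈ Q
  have hkey : ∀ x ∈ Q, C ≤ ntMax n α u x := by
    intro x hx
    exact essSup_mono_measure' (Measure.restrict_mono (hsub x hx) le_rfl)
  -- averaging
  have h1 : C * volume Q ≤ ∫⁻ y in Q, ntMax n α u y := by
    rw [← setLIntegral_const Q C]
    exact setLIntegral_mono' hQmeas hkey
  have h2 : C ≤ (∫⁻ y in Q, ntMax n α u y) / volume Q :=
    (ENNReal.le_div_iff_mul_le (Or.inl hvol0) (Or.inl hvoltop)).2 h1
  exact h2.trans (le_iSup_of_le k (le_iSup_of_le m (le_iSup_of_le subset_rfl le_rfl)))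
end
end
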